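/- A graph G is a hereditary bipartite-unigraph if and only if the disjoint union of G with a single isolated vertex is a hereditary bipartite-unigraph. -/
import Mathlib

open SimpleGraph

/-- The degree sequence of a finite simple graph, as a multiset of natural numbers. -/
noncomputable def degSeq {V : Type} [Fintype V] (G : SimpleGraph V) : Multiset ℕ :=
  Finset.univ.val.map fun v => Nat.card (G.neighborSet v)

/-- A graph is a bipartite-unigraph if it is bipartite (2-colorable) and every
bipartite graph with the same degree sequence is isomorphic to it. -/
def IsBipartiteUnigraph {V : Type} [Fintype V] (G : SimpleGraph V) : Prop :=
  G.Colorable 2 ∧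
    ∀ (W : Type) [Fintype W] (H : SimpleGraph W),
      H.Colorable 2 → degSeq H = degSeq G → Nonempty (H ≃g G)

/-- A graph is a hereditary bipartite-unigraph if every induced subgraph of it
is a bipartite-unigraph. -/
def IsHereditaryBipartiteUnigraph {V : Type} [Fintype V] (G : SimpleGraph V) : Prop :=
  ∀ s : Finset V, IsBipartiteUnigraph (G.induce (s : Set V))

/-- The graph obtained from `G` by adding a single isolated vertex. -/
def addIsolated {V : Type} (G : SimpleGraph V) : SimpleGraph (Option V) :=
  SimpleGraph.fromRel fun x y =>
    match x, y with
    | some u, some w => G.Adj u w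
    | _, _ => False

/- ---------- auxiliary lemmas ---------- -/

lemma addIsolated_adj_some {V : Type} (G : SimpleGraph V) (u w : V) :
    (addIsolated G).Adj (some u) (some w) ↔ G.Adj u w := by
  simp only [addIsolated, SimpleGraph.fromRel_adj]
  constructor
  · rintro ⟨-, h | h⟩
    · exact h
    · exact h.symm
  · intro h
    exact ⟨fun e => G.ne_of_adj h (Option.some.inj e), Or.inl h⟩

lemma addIsolated_not_adj_none_left {V : Type} (G : SimpleGraph V) (x : Option V) :
    ¬ (addIsolated G).Adj none x := by
  rintro ⟨-, h | h⟩ <;> rcases x <;> simp_all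

lemma addIsolated_not_adj_none_right {V : Type} (G : SimpleGraph V) (x : Option V) :
    ¬ (addIsolated G).Adj x none := fun h =>
  addIsolated_not_adj_none_left G x h.symm

lemma degSeq_iso {V W : Type} [Fintype V] [Fintype W] {G : SimpleGraph V}
    {H : SimpleGraph W} (e : G ≃g H) : degSeq G = degSeq H := by
  unfold degSeq
  have huniv : (Finset.univ : Finset W) = Finset.univ.map e.toEquiv.toEmbedding :=
    (Finset.map_univ_equiv e.toEquiv).symm
  rw [huniv, Finset.map_val, Multiset.map_map]
  congr 1
  funext v
  exact Nat.card_congr (e.mapNeighborSet v)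

lemma isBipartiteUnigraph_of_iso {V W : Type} [Fintype V] [Fintype W]
    {G : SimpleGraph V} {H : SimpleGraph W} (e : G ≃g H)
    (h : IsBipartiteUnigraph H) : IsBipartiteUnigraph G := by
  obtain ⟨hc, hu⟩ := h
  constructor
  · obtain ⟨c⟩ := hc
    exact ⟨c.comp e.toHom⟩
  · intro W' _ H' hc' hd'
    obtain ⟨f⟩ := hu W' H' hc' (hd'.trans (degSeq_iso e))
    exact ⟨f.trans e.symm⟩

/-- `addIsolated` is functorial on isomorphisms. -/
def addIsolatedIso {V W : Type} {G : SimpleGraph V} {H : SimpleGraph W} (e : G ≃g H) :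
    addIsolated G ≃g addIsolated H where
  toEquiv := e.toEquiv.optionCongr
  map_rel_iff' := by
    rintro (_ | u) (_ | w) <;>
      simp [addIsolated_adj_some, addIsolated_not_adj_none_left,
        addIsolated_not_adj_none_right, e.map_adj_iff]

open Classical in
/-- Splitting off an isolated vertex. -/
noncomputable def isolatedSplit {W : Type} (H : SimpleGraph W) (w0 : W)
    (h : ∀ y, ¬ H.Adj w0 y) :
    H ≃g addIsolated (H.induce {x | x ≠ w0}) where
  toFun x := if hx : x = w0 then none else some ⟨x, hx⟩
  invFun y := y.elim w0 Subtype.val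
  left_inv x := by
    by_cases hx : x = w0
    · simp [hx]
    · simp [hx]
  right_inv y := by
    rcases y with _ | ⟨v, hv⟩
    · simp
    · have hv' : v ≠ w0 := hv
      simp [hv']
  map_rel_iff' := by
    intro x y
    simp only [Equiv.coe_fn_mk]
    by_cases hx : x = w0
    · subst hx
      rw [dif_pos rfl]
      constructor
      · intro hc; exact absurd hc (addIsolated_not_adj_none_left _ _)
      · intro hc; exact absurd hc (h y)
    · by_cases hy : y = w0
      · subst hy
        rw [dif_neg hx, dif_pos rfl]
        constructor
        · intro hc; exact absurd hc (addIsolated_not_adj_none_right _ _)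
        · intro hc; exact absurd hc.symm (h x)
      · rw [dif_neg hx, dif_neg hy, addIsolated_adj_some]
        simp

lemma degSeq_addIsolated {W : Type} [Fintype W] (K : SimpleGraph W) :
    degSeq (addIsolated K) = 0 ::ₘ degSeq K := by
  unfold degSeq
  have huniv : (Finset.univ : Finset (Option W)).val
      = none ::ₘ (Finset.univ : Finset W).val.map some := by
    rw [univ_option]
    rfl
  rw [huniv, Multiset.map_cons, Multiset.map_map]
  congr 1
  · have : (addIsolated K).neighborSet none = ∅ := by
      ext x
      simp [addIsolated_not_adj_none_left K x]
    simp [this]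
  · congr 1
    funext w
    have : (addIsolated K).neighborSet (some w) = some '' K.neighborSet w := by
      ext x
      rcases x with _ | u
      · simp [Function.Embedding.coe_subtype, addIsolated_not_adj_none_right]
      · simp [SimpleGraph.mem_neighborSet, addIsolated_adj_some]
    rw [Function.comp_apply, this, Nat.card_coe_set_eq, Nat.card_coe_set_eq,
      Set.ncard_image_of_injective _ (Option.some_injective W)]

lemma isBipartiteUnigraph_addIsolated {W : Type} [Fintype W] {K : SimpleGraph W}
    (hK : IsBipartiteUnigraph K) : IsBipartiteUnigraph (addIsolated K) := by
  classical
  constructor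
  · obtain ⟨c⟩ := hK.1
    exact ⟨SimpleGraph.Coloring.mk (fun x => x.elim 0 c) (by
      rintro (_ | u) (_ | w) h
      · exact absurd h ((addIsolated K).irrefl)
      · exact absurd h (addIsolated_not_adj_none_left _ _)
      · exact absurd h (addIsolated_not_adj_none_right _ _)
      · exact c.valid ((addIsolated_adj_some K u w).mp h))⟩
  · intro W' _ H hHc hHd
    have h0 : (0 : ℕ) ∈ degSeq H := by
      rw [hHd, degSeq_addIsolated]
      exact Multiset.mem_cons_self _ _
    obtain ⟨w0, -, hw0card⟩ := Multiset.mem_map.mp h0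
    have hw0 : ∀ y, ¬ H.Adj w0 y := by
      intro y hy
      have : (0 : ℕ) < Nat.card (H.neighborSet w0) :=
        @Nat.card_pos _ ⟨⟨y, hy⟩⟩ (Set.toFinite _)
      omega
    let eD := isolatedSplit H w0 hw0
    letI : Fintype ({x : W' | x ≠ w0} : Set W') := Set.Finite.fintype (Set.toFinite _)
    have hdeg : degSeq (H.induce {x | x ≠ w0}) = degSeq K := by
      have h1 := degSeq_iso eD
      rw [degSeq_addIsolated] at h1
      rw [h1, degSeq_addIsolated] at hHd
      exact (Multiset.cons_inj_right 0).mp hHd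
    have hcol : (H.induce {x | x ≠ w0}).Colorable 2 := by
      obtain ⟨c⟩ := hHc
      exact ⟨c.comp (SimpleGraph.Embedding.induce _).toHom⟩
    obtain ⟨f⟩ := hK.2 _ (H.induce {x | x ≠ w0}) hcol hdeg
    exact ⟨eD.trans (addIsolatedIso f)⟩

/-- Induced subgraph of `addIsolated G` on a set not containing `none`. -/
noncomputable def induceSomeIso {V : Type} (G : SimpleGraph V) (s : Finset (Option V))
    (hs : none ∉ s) :
    (addIsolated G).induce (s : Set (Option V)) ≃g
      G.induce ((s.preimage some (Option.some_injective V).injOn : Finset V) : Set V) where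
  toFun := fun x => match x with
    | ⟨some v, hv⟩ => ⟨v, Finset.mem_preimage.mpr hv⟩
    | ⟨none, hv⟩ => absurd hv hs
  invFun := fun v => ⟨some v.1, Finset.mem_preimage.mp v.2⟩
  left_inv := by
    rintro ⟨_ | v, hv⟩
    · exact absurd hv hs
    · rfl
  right_inv := by
    rintro ⟨v, hv⟩
    rfl
  map_rel_iff' := by
    rintro ⟨_ | u, hu⟩ ⟨_ | w, hw⟩
    · exact absurd hu hs
    · exact absurd hu hs
    · exact absurd hw hs
    · exact (addIsolated_adj_some G u w).symm

/-- Induced subgraph of `addIsolated G` on a set containing `none`. -/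
noncomputable def induceNoneIso {V : Type} (G : SimpleGraph V) (s : Finset (Option V))
    (hs : none ∈ s) :
    (addIsolated G).induce (s : Set (Option V)) ≃g
      addIsolated (G.induce
        ((s.preimage some (Option.some_injective V).injOn : Finset V) : Set V)) where
  toFun := fun x => match x with
    | ⟨some v, hv⟩ => some ⟨v, Finset.mem_preimage.mpr hv⟩
    | ⟨none, _⟩ => none
  invFun := fun y => match y with
    | some v => ⟨some v.1, Finset.mem_preimage.mp v.2⟩
    | none => ⟨none, hs⟩
  left_inv := by
    rintro ⟨_ | v, hv⟩ <;> rfl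
  right_inv := by
    rintro (_ | ⟨v, hv⟩) <;> rfl
  map_rel_iff' := by
    rintro ⟨_ | u, hu⟩ ⟨_ | w, hw⟩
    · show (addIsolated _).Adj none none ↔ (addIsolated G).Adj none none
      simp [addIsolated_not_adj_none_left]
    · show (addIsolated _).Adj none (some _) ↔ (addIsolated G).Adj none (some w)
      simp [addIsolated_not_adj_none_left]
    · show (addIsolated _).Adj (some _) none ↔ (addIsolated G).Adj (some u) none
      simp [addIsolated_not_adj_none_right]
    · exact Iff.trans
        (addIsolated_adj_some (G.induce _) ⟨u, Finset.mem_preimage.mpr hu⟩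
          ⟨w, Finset.mem_preimage.mpr hw⟩)
        (addIsolated_adj_some G u w).symm

/-- Induced subgraph of `G` versus `addIsolated G` on the image finset. -/
noncomputable def mapSomeIso {V : Type} (G : SimpleGraph V) (t : Finset V) :
    G.induce (t : Set V) ≃g
      (addIsolated G).induce ((t.map ⟨some, Option.some_injective V⟩ : Finset (Option V)) :
        Set (Option V)) where
  toFun := fun v => ⟨some v.1, by simpa using Finset.mem_map_of_mem _ v.2⟩
  invFun := fun x => match x with
    | ⟨some v, hv⟩ => ⟨v, by simpa using hv⟩
    | ⟨none, hv⟩ => absurd hv (by simp)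
  left_inv := by
    rintro ⟨v, hv⟩
    rfl
  right_inv := by
    rintro ⟨_ | v, hv⟩
    · exact absurd hv (by simp)
    · rfl
  map_rel_iff' := by
    rintro ⟨u, hu⟩ ⟨w, hw⟩
    exact addIsolated_adj_some G u w

/-- `G` is a hereditary bipartite-unigraph iff the disjoint union of `G` with a
single isolated vertex is a hereditary bipartite-unigraph. -/
theorem hereditaryBipartiteUnigraph_iff_addIsolated
    {V : Type} [Fintype V] (G : SimpleGraph V) :
    IsHereditaryBipartiteUnigraph G ↔ IsHereditaryBipartiteUnigraph (addIsolated G) := by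
  classical
  constructor
  · intro hG s
    by_cases hn : none ∈ s
    · exact isBipartiteUnigraph_of_iso (induceNoneIso G s hn)
        (isBipartiteUnigraph_addIsolated (hG _))
    · exact isBipartiteUnigraph_of_iso (induceSomeIso G s hn) (hG _)
  · intro hA t
    exact isBipartiteUnigraph_of_iso (mapSomeIso G t) (hA _)
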